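/- Fix N ≥ 1 and work on the (2N+2)-qubit space (ℂ²)^{⊗(2N+2)}, with X_j, Z_j the Pauli matrices acting on qubit j and the identity elsewhere. Let H_p = −Σ_{i=1}^{N+1} X_{2i−1}X_{2i} + Σ_{i=1}^{N} Z_{2i}Z_{2i+1} + Z₁Z_{2N+2}, and for real s and real couplings J_1, …, J_{N−1} let H̄_S(s) = (1−s)·Σ_{i=1}^{N} X_{2i}X_{2i+1} + s·Σ_{i=1}^{N−1} J_i·Z_{2i+1}Z_{2i+2}. Then for every s and every choice of the J_i: [H̄_S(s), H_p] = 0. -/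
import Mathlib


/-- The Pauli matrix `X`. -/
def pauliX : Matrix (Fin 2) (Fin 2) ℂ := !![0, 1; 1, 0]

/-- The Pauli matrix `Z`. -/
def pauliZ : Matrix (Fin 2) (Fin 2) ℂ := !![1, 0; 0, -1]

/-- The `n`-qubit operator acting as the 2×2 matrix `P` on qubit `j` and as the
identity on every other qubit (the Kronecker product `I ⊗ ⋯ ⊗ P ⊗ ⋯ ⊗ I`). -/
noncomputable def pauliAt {n : ℕ} (P : Matrix (Fin 2) (Fin 2) ℂ) (j : Fin n) :
    Matrix (Fin n → Fin 2) (Fin n → Fin 2) ℂ :=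
  Matrix.of fun v w => ∏ i, if i = j then P (v i) (w i) else (if v i = w i then 1 else 0)

/-! ### Auxiliary machinery -/

/-- Tensor product of one matrix per site. -/
noncomputable def tens {n : ℕ} (M : Fin n → Matrix (Fin 2) (Fin 2) ℂ) :
    Matrix (Fin n → Fin 2) (Fin n → Fin 2) ℂ :=
  Matrix.of fun v w => ∏ i, M i (v i) (w i)

lemma pauliAt_eq_tens {n : ℕ} (P : Matrix (Fin 2) (Fin 2) ℂ) (j : Fin n) :
    pauliAt P j = tens (fun i => if i = j then P else 1) := by
  ext v w
  simp only [pauliAt, tens, Matrix.of_apply]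
  refine Finset.prod_congr rfl fun i _ => ?_
  by_cases h : i = j <;> simp [h, Matrix.one_apply]

lemma tens_mul {n : ℕ} (M N : Fin n → Matrix (Fin 2) (Fin 2) ℂ) :
    tens M * tens N = tens (fun i => M i * N i) := by
  ext v w
  simp only [tens, Matrix.mul_apply, Matrix.of_apply]
  rw [Finset.prod_univ_sum, ← Fintype.piFinset_univ]
  refine Finset.sum_congr rfl fun u _ => ?_
  rw [Finset.prod_mul_distrib]

lemma pauliAt_mul_same {n : ℕ} (P Q : Matrix (Fin 2) (Fin 2) ℂ) (j : Fin n) :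
    pauliAt P j * pauliAt Q j = pauliAt (P * Q) j := by
  rw [pauliAt_eq_tens, pauliAt_eq_tens, pauliAt_eq_tens, tens_mul]
  have e : (fun i => (if i = j then P else 1) * if i = j then Q else 1)
      = fun i : Fin n => if i = j then P * Q else 1 := by
    funext i
    by_cases h : i = j <;> simp [h]
  rw [e]

lemma pauliAt_comm {n : ℕ} {P Q : Matrix (Fin 2) (Fin 2) ℂ} {a b : Fin n} (h : a ≠ b) :
    pauliAt P a * pauliAt Q b = pauliAt Q b * pauliAt P a := by
  rw [pauliAt_eq_tens P, pauliAt_eq_tens Q, tens_mul, tens_mul]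
  have e : (fun i => (if i = a then P else 1) * if i = b then Q else 1)
      = fun i : Fin n => (if i = b then Q else 1) * if i = a then P else 1 := by
    funext i
    by_cases h1 : i = a <;> by_cases h2 : i = b <;> simp_all
  rw [e]

lemma pauliAt_apply' {n : ℕ} (P : Matrix (Fin 2) (Fin 2) ℂ) (j : Fin n)
    (v w : Fin n → Fin 2) :
    pauliAt P j v w =
      P (v j) (w j) * ∏ i ∈ Finset.univ.erase j, (if v i = w i then (1 : ℂ) else 0) := by
  show (∏ i, if i = j then P (v i) (w i) else (if v i = w i then (1:ℂ) else 0)) = _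
  rw [← Finset.mul_prod_erase _ _ (Finset.mem_univ j), if_pos rfl]
  congr 1
  exact Finset.prod_congr rfl fun i hi => if_neg (Finset.ne_of_mem_erase hi)

lemma pauliAt_neg {n : ℕ} (P : Matrix (Fin 2) (Fin 2) ℂ) (j : Fin n) :
    pauliAt (-P) j = -pauliAt P j := by
  ext v w
  simp [pauliAt_apply', neg_mul]

lemma pauliAt_anticomm {n : ℕ} {P Q : Matrix (Fin 2) (Fin 2) ℂ}
    (hPQ : P * Q = -(Q * P)) (j : Fin n) :
    pauliAt P j * pauliAt Q j = -(pauliAt Q j * pauliAt P j) := by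
  rw [pauliAt_mul_same, pauliAt_mul_same, hPQ, pauliAt_neg]

lemma anticomm_pair_ring {R : Type*} [Ring R] (A B C D : R)
    (hBC : B * C = C * B) (hAD : A * D = D * A)
    (hAC : A * C = -(C * A)) (hBD : B * D = -(D * B)) :
    A * B * (C * D) = C * D * (A * B) := by
  calc A * B * (C * D) = A * (B * C) * D := by simp [mul_assoc]
    _ = A * (C * B) * D := by rw [hBC]
    _ = (A * C) * (B * D) := by simp [mul_assoc]
    _ = (-(C * A)) * (-(D * B)) := by rw [hAC, hBD]
    _ = C * (A * D) * B := by simp [mul_assoc]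
    _ = C * (D * A) * B := by rw [hAD]
    _ = C * D * (A * B) := by simp [mul_assoc]

lemma commute_single {n : ℕ} (P Q : Matrix (Fin 2) (Fin 2) ℂ) (a c : Fin n)
    (h : a ≠ c ∨ P * Q = Q * P) : Commute (pauliAt P a) (pauliAt Q c) := by
  rcases h with h | h
  · exact pauliAt_comm h
  · by_cases hac : a = c
    · subst hac
      show pauliAt P a * pauliAt Q a = pauliAt Q a * pauliAt P a
      rw [pauliAt_mul_same, pauliAt_mul_same, h]
    · exact pauliAt_comm hac

lemma commute_pairs_of_comm {n : ℕ} (P Q : Matrix (Fin 2) (Fin 2) ℂ)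
    (hPQ : P * Q = Q * P) (a b c d : Fin n) :
    Commute (pauliAt P a * pauliAt P b) (pauliAt Q c * pauliAt Q d) :=
  (((commute_single P Q a c (Or.inr hPQ)).mul_right
      (commute_single P Q a d (Or.inr hPQ))).mul_left
    ((commute_single P Q b c (Or.inr hPQ)).mul_right
      (commute_single P Q b d (Or.inr hPQ))))

lemma commute_pairs_disjoint {n : ℕ} (P Q : Matrix (Fin 2) (Fin 2) ℂ)
    (a b c d : Fin n) (hac : a ≠ c) (had : a ≠ d) (hbc : b ≠ c) (hbd : b ≠ d) :
    Commute (pauliAt P a * pauliAt P b) (pauliAt Q c * pauliAt Q d) :=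
  (((commute_single P Q a c (Or.inl hac)).mul_right
      (commute_single P Q a d (Or.inl had))).mul_left
    ((commute_single P Q b c (Or.inl hbc)).mul_right
      (commute_single P Q b d (Or.inl hbd))))

lemma commute_pairs_anti {n : ℕ} (P Q : Matrix (Fin 2) (Fin 2) ℂ)
    (hPQ : P * Q = -(Q * P)) (a b c d : Fin n)
    (hab : a ≠ b) (hca : c = a) (hdb : d = b) :
    Commute (pauliAt P a * pauliAt P b) (pauliAt Q c * pauliAt Q d) := by
  rw [hca, hdb]
  show _ * _ = _ * _
  exact anticomm_pair_ring _ _ _ _ (pauliAt_comm hab.symm) (pauliAt_comm hab)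
    (pauliAt_anticomm hPQ a) (pauliAt_anticomm hPQ b)

lemma commute_smul_left' {m : Type*} [Fintype m] [DecidableEq m]
    {A B : Matrix m m ℂ} (h : Commute A B) (c : ℂ) : Commute (c • A) B := by
  show c • A * B = B * (c • A)
  rw [smul_mul_assoc, mul_smul_comm, h.eq]

lemma pauliXZ_anti : pauliX * pauliZ = -(pauliZ * pauliX) := by
  ext i j
  fin_cases i <;> fin_cases j <;>
    simp [pauliX, pauliZ, Matrix.mul_apply, Fin.sum_univ_two]

lemma pauliZX_anti : pauliZ * pauliX = -(pauliX * pauliZ) := by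
  rw [pauliXZ_anti, neg_neg]

/-- The encoded Ising chain in a transverse field
`H̄_S(s) = (1-s) Σ_{i=1}^N X_{2i}X_{2i+1} + s Σ_{i=1}^{N-1} J_i Z_{2i+1}Z_{2i+2}`
commutes with the penalty Hamiltonian
`H_p = -Σ_{i=1}^{N+1} X_{2i-1}X_{2i} + Σ_{i=1}^N Z_{2i}Z_{2i+1} + Z₁Z_{2N+2}`
on `2N+2` qubits (qubit `k`, `1 ≤ k ≤ 2N+2`, is index `k-1`). -/
theorem ising_chain_commutes_with_penalty
    (N : ℕ) (hN : 1 ≤ N)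
    (J : Fin (N - 1) → ℝ)
    (Hp : Matrix (Fin (2 * N + 2) → Fin 2) (Fin (2 * N + 2) → Fin 2) ℂ)
    (hHpdef : Hp =
      -(∑ i : Fin (N + 1),
          pauliAt pauliX ⟨2 * (i : ℕ), by have := i.isLt; omega⟩ *
          pauliAt pauliX ⟨2 * (i : ℕ) + 1, by have := i.isLt; omega⟩) +
      (∑ i : Fin N,
          pauliAt pauliZ ⟨2 * (i : ℕ) + 1, by have := i.isLt; omega⟩ *
          pauliAt pauliZ ⟨2 * (i : ℕ) + 2, by have := i.isLt; omega⟩) +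
      pauliAt pauliZ ⟨0, by omega⟩ * pauliAt pauliZ ⟨2 * N + 1, by omega⟩)
    (HbarS : ℝ → Matrix (Fin (2 * N + 2) → Fin 2) (Fin (2 * N + 2) → Fin 2) ℂ)
    (hHbardef : ∀ s : ℝ, HbarS s =
      ((1 - s : ℝ) : ℂ) •
        (∑ i : Fin N,
          pauliAt pauliX ⟨2 * (i : ℕ) + 1, by have := i.isLt; omega⟩ *
          pauliAt pauliX ⟨2 * (i : ℕ) + 2, by have := i.isLt; omega⟩) +
      ((s : ℝ) : ℂ) •
        (∑ i : Fin (N - 1), ((J i : ℝ) : ℂ) •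
          (pauliAt pauliZ ⟨2 * (i : ℕ) + 2, by have := i.isLt; omega⟩ *
           pauliAt pauliZ ⟨2 * (i : ℕ) + 3, by have := i.isLt; omega⟩))) :
    ∀ s : ℝ, HbarS s * Hp - Hp * HbarS s = 0 := by
  intro s
  rw [hHbardef s, hHpdef, sub_eq_zero]
  refine Commute.eq ?_
  refine Commute.add_left ?_ ?_
  · refine commute_smul_left' ?_ _
    refine Commute.sum_left _ _ _ fun i _ => ?_
    refine Commute.add_right (Commute.add_right ?_ ?_) ?_
    · -- vs -Σ X X : same matrices, always commute
      exact (Commute.sum_right _ _ _ fun j _ =>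
        commute_pairs_of_comm pauliX pauliX rfl _ _ _ _).neg_right
    · -- vs Σ Z Z
      refine Commute.sum_right _ _ _ fun j _ => ?_
      by_cases h : (i : ℕ) = (j : ℕ)
      · exact commute_pairs_anti pauliX pauliZ pauliXZ_anti _ _ _ _
          ((by simp only [ne_eq, Fin.mk.injEq]; omega)) ((by simp only [Fin.mk.injEq]; omega)) ((by simp only [Fin.mk.injEq]; omega))
      · exact commute_pairs_disjoint pauliX pauliZ _ _ _ _
          ((by simp only [ne_eq, Fin.mk.injEq]; omega)) ((by simp only [ne_eq, Fin.mk.injEq]; omega))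
          ((by simp only [ne_eq, Fin.mk.injEq]; omega)) ((by simp only [ne_eq, Fin.mk.injEq]; omega))
    · -- vs boundary Z₁ Z_{2N+2} : disjoint sites
      have hi := i.isLt
      exact commute_pairs_disjoint pauliX pauliZ _ _ _ _
        ((by simp only [ne_eq, Fin.mk.injEq]; omega)) ((by simp only [ne_eq, Fin.mk.injEq]; omega))
        ((by simp only [ne_eq, Fin.mk.injEq]; omega)) ((by simp only [ne_eq, Fin.mk.injEq]; omega))
  · refine commute_smul_left' ?_ _
    refine Commute.sum_left _ _ _ fun i _ => ?_
    refine commute_smul_left' ?_ _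
    refine Commute.add_right (Commute.add_right ?_ ?_) ?_
    · -- vs -Σ X X
      refine (Commute.sum_right _ _ _ fun j _ => ?_).neg_right
      by_cases h : (j : ℕ) = (i : ℕ) + 1
      · exact commute_pairs_anti pauliZ pauliX pauliZX_anti _ _ _ _
          ((by simp only [ne_eq, Fin.mk.injEq]; omega)) ((by simp only [Fin.mk.injEq]; omega)) ((by simp only [Fin.mk.injEq]; omega))
      · exact commute_pairs_disjoint pauliZ pauliX _ _ _ _
          ((by simp only [ne_eq, Fin.mk.injEq]; omega)) ((by simp only [ne_eq, Fin.mk.injEq]; omega))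
          ((by simp only [ne_eq, Fin.mk.injEq]; omega)) ((by simp only [ne_eq, Fin.mk.injEq]; omega))
    · -- vs Σ Z Z : same matrices
      exact Commute.sum_right _ _ _ fun j _ =>
        commute_pairs_of_comm pauliZ pauliZ rfl _ _ _ _
    · -- vs boundary : same matrices
      exact commute_pairs_of_comm pauliZ pauliZ rfl _ _ _ _
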